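/- For n+1 = 3 (so L = (sl_3^+)_q has basis e_{12} < e_{13} < e_{23}), let L³ be the k-submodule of L⊗L⊗L generated by x ⊗ y ⊗ z with x < y < z basis elements (i.e., spanned by e_{12} ⊗ e_{13} ⊗ e_{23}). Then for every λ ∈ k, both braid identities hold on (ι⊗ι⊗ι)(L³): R₁(λ)R₂(λ)R₁(λ) = R₂(λ)R₁(λ)R₂(λ) and R'₁(λ)R'₂(λ)R'₁(λ) = R'₂(λ)R'₁(λ)R'₂(λ) there. -/
import Mathlib


open Finsupp TensorProduct

/-- Index pairs `1 ≤ i < j ≤ n+1`, modeled 0-based as pairs in `Fin (n+1)`. -/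
abbrev Idx (n : ℕ) := {p : Fin (n + 1) × Fin (n + 1) // p.1 < p.2}

/-- The total order on index pairs: `e_{ab} < e_{ij}` iff `a+b < i+j`, or
(`a+b = i+j` and `b < j`). -/
def idxLt {n : ℕ} (x y : Idx n) : Prop :=
  x.1.1.val + x.1.2.val < y.1.1.val + y.1.2.val ∨
    (x.1.1.val + x.1.2.val = y.1.1.val + y.1.2.val ∧ x.1.2.val < y.1.2.val)

instance {n : ℕ} : DecidableRel (idxLt (n := n)) := fun _ _ => by
  unfold idxLt; infer_instance

/-- The integer `c_{ab,ij} = δ_{ai} − δ_{aj} − δ_{bi} + δ_{bj}`. -/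
def cc {n : ℕ} (x y : Idx n) : ℤ :=
  (if x.1.1 = y.1.1 then 1 else 0) - (if x.1.1 = y.1.2 then 1 else 0)
    - (if x.1.2 = y.1.1 then 1 else 0) + (if x.1.2 = y.1.2 then 1 else 0)

variable (n : ℕ) (k : Type*) [CommRing k]

/-- The basis element `e_x` of the free module `L = (sl_{n+1}^+)_q`. -/
noncomputable def bas (x : Idx n) : Idx n →₀ k := Finsupp.single x 1

/-- The value `δ_{bi} e_{aj} − δ_{ja} e_{ib}` of the classical commutator of matrix
units, as an element of the free module. -/
noncomputable def qcomm (x y : Idx n) : Idx n →₀ k :=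
  (if h : x.1.2 = y.1.1 then
      Finsupp.single ⟨(x.1.1, y.1.2), (x.2.trans_eq h).trans y.2⟩ (1 : k)
    else 0)
  - (if h : y.1.2 = x.1.1 then
      Finsupp.single ⟨(y.1.1, x.1.2), (y.2.trans_eq h).trans x.2⟩ (1 : k)
    else 0)

variable (q : kˣ)

/-- The `q`-bracket `[e_x, e_y]_q` on basis elements. -/
noncomputable def br (x y : Idx n) : Idx n →₀ k :=
  if idxLt x y then qcomm n k x y
  else if x = y then 0
  else (-((q ^ cc y x : kˣ) : k)) • qcomm n k y x

/-- The scalar `q(x,y)`. -/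
noncomputable def qs (x y : Idx n) : k :=
  if idxLt x y then ((q ^ cc x y : kˣ) : k)
  else if x = y then 1
  else ((q ^ (-cc y x) : kˣ) : k)

/-- The `k`-bilinear extension of the `q`-bracket to `L = (sl_{n+1}^+)_q`. -/
noncomputable def brL : (Idx n →₀ k) →ₗ[k] (Idx n →₀ k) →ₗ[k] (Idx n →₀ k) :=
  Finsupp.lsum k fun x =>
    LinearMap.toSpanSingleton k ((Idx n →₀ k) →ₗ[k] (Idx n →₀ k))
      (Finsupp.lsum k fun y =>
        LinearMap.toSpanSingleton k (Idx n →₀ k) (br n k q x y))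


open TensorProduct

variable (k : Type*) [CommRing k] (M : Type*) [AddCommGroup M] [Module k M]

/-- The distinguished element `e = (0,1)` of `M̃ = M ⊕ k`. -/
def ee : M × k := (0, 1)

/-- `R(λ) : M̃⊗M̃ → M̃⊗M̃`, `R(λ)(u⊗v) = S̃(u⊗v) + ι β(pu ⊗ pv) ⊗ λe`, built from the
extension `St` of the presymmetry and a bracket `β`. -/
noncomputable def Rmap (St : ((M × k) ⊗[k] (M × k)) →ₗ[k] ((M × k) ⊗[k] (M × k)))
    (β : (M ⊗[k] M) →ₗ[k] M) (lam : k) :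
    ((M × k) ⊗[k] (M × k)) →ₗ[k] ((M × k) ⊗[k] (M × k)) :=
  St + ((TensorProduct.mk k (M × k) (M × k)).flip (lam • ee k M)).comp
    ((LinearMap.inl k M k).comp
      (β.comp (TensorProduct.map (LinearMap.fst k M k) (LinearMap.fst k M k))))

/-- `R'(λ) : M̃⊗M̃ → M̃⊗M̃`, `R'(λ)(u⊗v) = S̃(u⊗v) + λe ⊗ ι β(pu ⊗ pv)`. -/
noncomputable def Rmap' (St : ((M × k) ⊗[k] (M × k)) →ₗ[k] ((M × k) ⊗[k] (M × k)))
    (β : (M ⊗[k] M) →ₗ[k] M) (lam : k) :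
    ((M × k) ⊗[k] (M × k)) →ₗ[k] ((M × k) ⊗[k] (M × k)) :=
  St + ((TensorProduct.mk k (M × k) (M × k)) (lam • ee k M)).comp
    ((LinearMap.inl k M k).comp
      (β.comp (TensorProduct.map (LinearMap.fst k M k) (LinearMap.fst k M k))))

/-- `f ⊗ 1` acting on the first two factors of `(M⊗M)⊗M`. -/
noncomputable def tensorOne (f : (M ⊗[k] M) →ₗ[k] (M ⊗[k] M)) :
    ((M ⊗[k] M) ⊗[k] M) →ₗ[k] ((M ⊗[k] M) ⊗[k] M) :=
  TensorProduct.map f LinearMap.id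

/-- `1 ⊗ f` acting on the last two factors of `(M⊗M)⊗M`. -/
noncomputable def oneTensor (f : (M ⊗[k] M) →ₗ[k] (M ⊗[k] M)) :
    ((M ⊗[k] M) ⊗[k] M) →ₗ[k] ((M ⊗[k] M) ⊗[k] M) :=
  (TensorProduct.assoc k M M M).symm.toLinearMap ∘ₗ
    (TensorProduct.map LinearMap.id f) ∘ₗ (TensorProduct.assoc k M M M).toLinearMap

/-- `β ⊗ 1 : (M⊗M)⊗M → M⊗M`. -/
noncomputable def betaOne (β : (M ⊗[k] M) →ₗ[k] M) :
    ((M ⊗[k] M) ⊗[k] M) →ₗ[k] (M ⊗[k] M) :=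
  TensorProduct.map β LinearMap.id

/-- `1 ⊗ β : (M⊗M)⊗M → M⊗M` (after reassociating). -/
noncomputable def oneBeta (β : (M ⊗[k] M) →ₗ[k] M) :
    ((M ⊗[k] M) ⊗[k] M) →ₗ[k] (M ⊗[k] M) :=
  (TensorProduct.map LinearMap.id β) ∘ₗ (TensorProduct.assoc k M M M).toLinearMap

/-- `ι ⊗ ι ⊗ ι : (M⊗M)⊗M → (M̃⊗M̃)⊗M̃`. -/
noncomputable def iii : ((M ⊗[k] M) ⊗[k] M) →ₗ[k] (((M × k) ⊗[k] (M × k)) ⊗[k] (M × k)) :=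
  TensorProduct.map (TensorProduct.map (LinearMap.inl k M k) (LinearMap.inl k M k))
    (LinearMap.inl k M k)

section Aux

/-- e_{12} -/
def ea : Idx 2 := ⟨(0,1), by decide⟩
/-- e_{13} -/
def eb : Idx 2 := ⟨(0,2), by decide⟩
/-- e_{23} -/
def ecc : Idx 2 := ⟨(1,2), by decide⟩

lemma hlt1 : ∀ x y z : Idx 2, idxLt x y → idxLt y z → x = ea := by decide
lemma hlt2 : ∀ x y z : Idx 2, idxLt x y → idxLt y z → y = eb := by decide
lemma hlt3 : ∀ x y z : Idx 2, idxLt x y → idxLt y z → z = ecc := by decide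

variable {k : Type*} [CommRing k] (q : kˣ)

lemma lift_brL (x y : Idx 2) :
    TensorProduct.lift (brL 2 k q) (bas 2 k x ⊗ₜ[k] bas 2 k y) = br 2 k q x y := by
  simp [brL, bas]

lemma br_ea_eb : br 2 k (q := q) ea eb = 0 := by
  rw [br, if_pos (by decide : idxLt ea eb), qcomm, dif_neg (by decide), dif_neg (by decide)]
  simp

lemma br_eb_ec : br 2 k (q := q) eb ecc = 0 := by
  rw [br, if_pos (by decide : idxLt eb ecc), qcomm, dif_neg (by decide), dif_neg (by decide)]
  simp

lemma br_eb_eb : br 2 k (q := q) eb eb = 0 := by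
  rw [br, if_neg (by decide : ¬ idxLt eb eb), if_pos rfl]

lemma br_ea_ec : br 2 k (q := q) ea ecc = bas 2 k eb := by
  rw [br, if_pos (by decide : idxLt ea ecc), qcomm,
    dif_pos (by decide : ea.1.2 = ecc.1.1), dif_neg (by decide)]
  simp [bas]
  rfl

lemma qs_ea_eb : qs 2 k q ea eb = ((q ^ (1 : ℤ) : kˣ) : k) := by
  rw [qs, if_pos (by decide : idxLt ea eb), show cc ea eb = 1 from by decide]

lemma qs_ea_ec : qs 2 k q ea ecc = ((q ^ (-1 : ℤ) : kˣ) : k) := by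
  rw [qs, if_pos (by decide : idxLt ea ecc), show cc ea ecc = -1 from by decide]

lemma qs_eb_ec : qs 2 k q eb ecc = ((q ^ (1 : ℤ) : kˣ) : k) := by
  rw [qs, if_pos (by decide : idxLt eb ecc), show cc eb ecc = 1 from by decide]

lemma qs_eb_eb : qs 2 k q eb eb = 1 := by
  rw [qs, if_neg (by decide : ¬ idxLt eb eb), if_pos rfl]

variable (M : Type*) [AddCommGroup M] [Module k M]

lemma Rmap_tmul (St : ((M × k) ⊗[k] (M × k)) →ₗ[k] ((M × k) ⊗[k] (M × k)))
    (β : (M ⊗[k] M) →ₗ[k] M) (lam : k) (u v : M × k) :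
    Rmap k M St β lam (u ⊗ₜ[k] v)
      = St (u ⊗ₜ[k] v) + (LinearMap.inl k M k (β (u.1 ⊗ₜ[k] v.1))) ⊗ₜ[k] (lam • ee k M) := by
  simp [Rmap]

lemma Rmap'_tmul (St : ((M × k) ⊗[k] (M × k)) →ₗ[k] ((M × k) ⊗[k] (M × k)))
    (β : (M ⊗[k] M) →ₗ[k] M) (lam : k) (u v : M × k) :
    Rmap' k M St β lam (u ⊗ₜ[k] v)
      = St (u ⊗ₜ[k] v) + (lam • ee k M) ⊗ₜ[k] (LinearMap.inl k M k (β (u.1 ⊗ₜ[k] v.1))) := by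
  simp [Rmap', smul_tmul']

lemma tensorOne_tmul (f : ((M × k) ⊗[k] (M × k)) →ₗ[k] ((M × k) ⊗[k] (M × k)))
    (u v w : M × k) :
    tensorOne k (M × k) f ((u ⊗ₜ[k] v) ⊗ₜ[k] w) = f (u ⊗ₜ[k] v) ⊗ₜ[k] w := by
  simp [tensorOne]

lemma oneTensor_tmul (f : ((M × k) ⊗[k] (M × k)) →ₗ[k] ((M × k) ⊗[k] (M × k)))
    (u v w : M × k) :
    oneTensor k (M × k) f ((u ⊗ₜ[k] v) ⊗ₜ[k] w)
      = (TensorProduct.assoc k (M × k) (M × k) (M × k)).symm (u ⊗ₜ[k] f (v ⊗ₜ[k] w)) := by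
  simp [oneTensor]

end Aux

section Aux2
variable {k : Type*} [CommRing k] (q : kˣ)

lemma ee_fst (M : Type*) [AddCommGroup M] [Module k M] : (ee k M).1 = 0 := rfl

lemma inl_fst (M : Type*) [AddCommGroup M] [Module k M] (u : M) :
    (LinearMap.inl k M k u).1 = u := rfl

lemma genR
    (S : ((Idx 2 →₀ k) ⊗[k] (Idx 2 →₀ k)) →ₗ[k] ((Idx 2 →₀ k) ⊗[k] (Idx 2 →₀ k)))
    (hS : ∀ x y : Idx 2, S (bas 2 k x ⊗ₜ[k] bas 2 k y)
        = qs 2 k q x y • (bas 2 k y ⊗ₜ[k] bas 2 k x))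
    (St : (((Idx 2 →₀ k) × k) ⊗[k] ((Idx 2 →₀ k) × k)) →ₗ[k]
        (((Idx 2 →₀ k) × k) ⊗[k] ((Idx 2 →₀ k) × k)))
    (hSt1 : ∀ u v : Idx 2 →₀ k,
      St ((LinearMap.inl k (Idx 2 →₀ k) k u) ⊗ₜ[k] (LinearMap.inl k (Idx 2 →₀ k) k v))
        = (TensorProduct.map (LinearMap.inl k (Idx 2 →₀ k) k)
            (LinearMap.inl k (Idx 2 →₀ k) k)) (S (u ⊗ₜ[k] v)))
    (hSt2 : ∀ u : Idx 2 →₀ k,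
      St ((LinearMap.inl k (Idx 2 →₀ k) k u) ⊗ₜ[k] ee k (Idx 2 →₀ k))
        = ee k (Idx 2 →₀ k) ⊗ₜ[k] (LinearMap.inl k (Idx 2 →₀ k) k u))
    (hSt3 : ∀ u : Idx 2 →₀ k,
      St (ee k (Idx 2 →₀ k) ⊗ₜ[k] (LinearMap.inl k (Idx 2 →₀ k) k u))
        = (LinearMap.inl k (Idx 2 →₀ k) k u) ⊗ₜ[k] ee k (Idx 2 →₀ k))
    (β : ((Idx 2 →₀ k) ⊗[k] (Idx 2 →₀ k)) →ₗ[k] (Idx 2 →₀ k))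
    (hβ : ∀ x y : Idx 2, β (bas 2 k x ⊗ₜ[k] bas 2 k y) = br 2 k q x y)
    (lam : k) :
    (tensorOne k ((Idx 2 →₀ k) × k) (Rmap k (Idx 2 →₀ k) St β lam)
        (oneTensor k ((Idx 2 →₀ k) × k) (Rmap k (Idx 2 →₀ k) St β lam)
          (tensorOne k ((Idx 2 →₀ k) × k) (Rmap k (Idx 2 →₀ k) St β lam)
            (iii k (Idx 2 →₀ k)
              ((bas 2 k ea ⊗ₜ[k] bas 2 k eb) ⊗ₜ[k] bas 2 k ecc)))))
      = oneTensor k ((Idx 2 →₀ k) × k) (Rmap k (Idx 2 →₀ k) St β lam)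
          (tensorOne k ((Idx 2 →₀ k) × k) (Rmap k (Idx 2 →₀ k) St β lam)
            (oneTensor k ((Idx 2 →₀ k) × k) (Rmap k (Idx 2 →₀ k) St β lam)
              (iii k (Idx 2 →₀ k)
                ((bas 2 k ea ⊗ₜ[k] bas 2 k eb) ⊗ₜ[k] bas 2 k ecc)))) := by
  simp only [iii, TensorProduct.map_tmul, tensorOne_tmul, oneTensor_tmul,
    Rmap_tmul, hSt1, hSt2, hSt3, hS, inl_fst, ee_fst,
    hβ, br_ea_eb, br_eb_ec, br_eb_eb, br_ea_ec,
    qs_ea_eb, qs_ea_ec, qs_eb_ec, qs_eb_eb,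
    map_add, map_smul, map_zero, LinearMap.map_zero,
    tmul_add, add_tmul, tmul_smul, ← smul_tmul', tmul_zero, zero_tmul,
    add_zero, zero_add, one_smul, smul_add, smul_zero,
    TensorProduct.assoc_symm_tmul, LinearEquiv.coe_coe]


lemma genR'
    (S : ((Idx 2 →₀ k) ⊗[k] (Idx 2 →₀ k)) →ₗ[k] ((Idx 2 →₀ k) ⊗[k] (Idx 2 →₀ k)))
    (hS : ∀ x y : Idx 2, S (bas 2 k x ⊗ₜ[k] bas 2 k y)
        = qs 2 k q x y • (bas 2 k y ⊗ₜ[k] bas 2 k x))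
    (St : (((Idx 2 →₀ k) × k) ⊗[k] ((Idx 2 →₀ k) × k)) →ₗ[k]
        (((Idx 2 →₀ k) × k) ⊗[k] ((Idx 2 →₀ k) × k)))
    (hSt1 : ∀ u v : Idx 2 →₀ k,
      St ((LinearMap.inl k (Idx 2 →₀ k) k u) ⊗ₜ[k] (LinearMap.inl k (Idx 2 →₀ k) k v))
        = (TensorProduct.map (LinearMap.inl k (Idx 2 →₀ k) k)
            (LinearMap.inl k (Idx 2 →₀ k) k)) (S (u ⊗ₜ[k] v)))
    (hSt2 : ∀ u : Idx 2 →₀ k,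
      St ((LinearMap.inl k (Idx 2 →₀ k) k u) ⊗ₜ[k] ee k (Idx 2 →₀ k))
        = ee k (Idx 2 →₀ k) ⊗ₜ[k] (LinearMap.inl k (Idx 2 →₀ k) k u))
    (hSt3 : ∀ u : Idx 2 →₀ k,
      St (ee k (Idx 2 →₀ k) ⊗ₜ[k] (LinearMap.inl k (Idx 2 →₀ k) k u))
        = (LinearMap.inl k (Idx 2 →₀ k) k u) ⊗ₜ[k] ee k (Idx 2 →₀ k))
    (β : ((Idx 2 →₀ k) ⊗[k] (Idx 2 →₀ k)) →ₗ[k] (Idx 2 →₀ k))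
    (hβ : ∀ x y : Idx 2, β (bas 2 k x ⊗ₜ[k] bas 2 k y) = br 2 k q x y)
    (lam : k) :
    (tensorOne k ((Idx 2 →₀ k) × k) (Rmap' k (Idx 2 →₀ k) St β lam)
        (oneTensor k ((Idx 2 →₀ k) × k) (Rmap' k (Idx 2 →₀ k) St β lam)
          (tensorOne k ((Idx 2 →₀ k) × k) (Rmap' k (Idx 2 →₀ k) St β lam)
            (iii k (Idx 2 →₀ k)
              ((bas 2 k ea ⊗ₜ[k] bas 2 k eb) ⊗ₜ[k] bas 2 k ecc)))))
      = oneTensor k ((Idx 2 →₀ k) × k) (Rmap' k (Idx 2 →₀ k) St β lam)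
          (tensorOne k ((Idx 2 →₀ k) × k) (Rmap' k (Idx 2 →₀ k) St β lam)
            (oneTensor k ((Idx 2 →₀ k) × k) (Rmap' k (Idx 2 →₀ k) St β lam)
              (iii k (Idx 2 →₀ k)
                ((bas 2 k ea ⊗ₜ[k] bas 2 k eb) ⊗ₜ[k] bas 2 k ecc)))) := by
  simp only [iii, TensorProduct.map_tmul, tensorOne_tmul, oneTensor_tmul,
    Rmap'_tmul, hSt1, hSt2, hSt3, hS, inl_fst, ee_fst,
    hβ, br_ea_eb, br_eb_ec, br_eb_eb, br_ea_ec,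
    qs_ea_eb, qs_ea_ec, qs_eb_ec, qs_eb_eb,
    map_add, map_smul, map_zero, LinearMap.map_zero,
    tmul_add, add_tmul, tmul_smul, ← smul_tmul', tmul_zero, zero_tmul,
    add_zero, zero_add, one_smul, smul_add, smul_zero,
    TensorProduct.assoc_symm_tmul, LinearEquiv.coe_coe]


end Aux2
/-- For `(sl_3^+)_q`, on the submodule `L³` generated by `x ⊗ y ⊗ z` with basis
elements `x < y < z`, both braid relations `R₁(λ)R₂(λ)R₁(λ) = R₂(λ)R₁(λ)R₂(λ)` and
`R'₁(λ)R'₂(λ)R'₁(λ) = R'₂(λ)R'₁(λ)R'₂(λ)` hold for every `λ`. -/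
theorem stmt15 {k : Type*} [CommRing k] (q : kˣ)
    (S : ((Idx 2 →₀ k) ⊗[k] (Idx 2 →₀ k)) →ₗ[k] ((Idx 2 →₀ k) ⊗[k] (Idx 2 →₀ k)))
    (hS : ∀ x y : Idx 2, S (bas 2 k x ⊗ₜ[k] bas 2 k y)
        = qs 2 k q x y • (bas 2 k y ⊗ₜ[k] bas 2 k x))
    (St : (((Idx 2 →₀ k) × k) ⊗[k] ((Idx 2 →₀ k) × k)) →ₗ[k]
        (((Idx 2 →₀ k) × k) ⊗[k] ((Idx 2 →₀ k) × k)))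
    (hSt1 : ∀ u v : Idx 2 →₀ k,
      St ((LinearMap.inl k (Idx 2 →₀ k) k u) ⊗ₜ[k] (LinearMap.inl k (Idx 2 →₀ k) k v))
        = (TensorProduct.map (LinearMap.inl k (Idx 2 →₀ k) k)
            (LinearMap.inl k (Idx 2 →₀ k) k)) (S (u ⊗ₜ[k] v)))
    (hSt2 : ∀ u : Idx 2 →₀ k,
      St ((LinearMap.inl k (Idx 2 →₀ k) k u) ⊗ₜ[k] ee k (Idx 2 →₀ k))
        = ee k (Idx 2 →₀ k) ⊗ₜ[k] (LinearMap.inl k (Idx 2 →₀ k) k u))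
    (hSt3 : ∀ u : Idx 2 →₀ k,
      St (ee k (Idx 2 →₀ k) ⊗ₜ[k] (LinearMap.inl k (Idx 2 →₀ k) k u))
        = (LinearMap.inl k (Idx 2 →₀ k) k u) ⊗ₜ[k] ee k (Idx 2 →₀ k))
    (hSt4 : St (ee k (Idx 2 →₀ k) ⊗ₜ[k] ee k (Idx 2 →₀ k))
        = ee k (Idx 2 →₀ k) ⊗ₜ[k] ee k (Idx 2 →₀ k)) :
    ∀ lam : k,
      ∀ v ∈ Submodule.span k
        {t : ((Idx 2 →₀ k) ⊗[k] (Idx 2 →₀ k)) ⊗[k] (Idx 2 →₀ k) |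
          ∃ x y z : Idx 2, idxLt x y ∧ idxLt y z ∧
            t = (bas 2 k x ⊗ₜ[k] bas 2 k y) ⊗ₜ[k] bas 2 k z},
        (tensorOne k ((Idx 2 →₀ k) × k)
            (Rmap k (Idx 2 →₀ k) St (TensorProduct.lift (brL 2 k q)) lam)
            (oneTensor k ((Idx 2 →₀ k) × k)
              (Rmap k (Idx 2 →₀ k) St (TensorProduct.lift (brL 2 k q)) lam)
              (tensorOne k ((Idx 2 →₀ k) × k)
                (Rmap k (Idx 2 →₀ k) St (TensorProduct.lift (brL 2 k q)) lam)
                (iii k (Idx 2 →₀ k) v)))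
          = oneTensor k ((Idx 2 →₀ k) × k)
              (Rmap k (Idx 2 →₀ k) St (TensorProduct.lift (brL 2 k q)) lam)
              (tensorOne k ((Idx 2 →₀ k) × k)
                (Rmap k (Idx 2 →₀ k) St (TensorProduct.lift (brL 2 k q)) lam)
                (oneTensor k ((Idx 2 →₀ k) × k)
                  (Rmap k (Idx 2 →₀ k) St (TensorProduct.lift (brL 2 k q)) lam)
                  (iii k (Idx 2 →₀ k) v)))) ∧
        (tensorOne k ((Idx 2 →₀ k) × k)
            (Rmap' k (Idx 2 →₀ k) St (TensorProduct.lift (brL 2 k q)) lam)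
            (oneTensor k ((Idx 2 →₀ k) × k)
              (Rmap' k (Idx 2 →₀ k) St (TensorProduct.lift (brL 2 k q)) lam)
              (tensorOne k ((Idx 2 →₀ k) × k)
                (Rmap' k (Idx 2 →₀ k) St (TensorProduct.lift (brL 2 k q)) lam)
                (iii k (Idx 2 →₀ k) v)))
          = oneTensor k ((Idx 2 →₀ k) × k)
              (Rmap' k (Idx 2 →₀ k) St (TensorProduct.lift (brL 2 k q)) lam)
              (tensorOne k ((Idx 2 →₀ k) × k)
                (Rmap' k (Idx 2 →₀ k) St (TensorProduct.lift (brL 2 k q)) lam)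
                (oneTensor k ((Idx 2 →₀ k) × k)
                  (Rmap' k (Idx 2 →₀ k) St (TensorProduct.lift (brL 2 k q)) lam)
                  (iii k (Idx 2 →₀ k) v)))) := by
  intro lam v hv
  induction hv using Submodule.span_induction with
  | mem t ht =>
      obtain ⟨x, y, z, hxy, hyz, rfl⟩ := ht
      obtain rfl : x = ea := hlt1 x y z hxy hyz
      obtain rfl : y = eb := hlt2 ea y z hxy hyz
      obtain rfl : z = ecc := hlt3 ea eb z hxy hyz
      exact ⟨genR q S hS St hSt1 hSt2 hSt3 _ (lift_brL q) lam,
             genR' q S hS St hSt1 hSt2 hSt3 _ (lift_brL q) lam⟩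
  | zero =>
      set_option synthInstance.maxHeartbeats 1000000 in
      constructor <;> simp only [map_zero]
  | add u w hu hw ihu ihw =>
      constructor <;> simp only [map_add, ihu.1, ihu.2, ihw.1, ihw.2]
  | smul a u hu ihu =>
      constructor <;> simp only [map_smul, ihu.1, ihu.2]
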